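/- arXiv:1610.05108 — 7 statements merged into one kernel-verified Lean document; each statement's English description precedes it below -/
import Mathlib

section
/- Let γ ∈ [0,1) and M ∈ ℕ with M ≥ 1. Then Σ_{r=1}^M (1/√r) · C(M,r) (1−γ)^r γ^{M−r} ≤ √2 / √((1−γ) M). -/
/-!
With `J ~ Binomial(M, p)`, `p = 1 - γ`, the sum is `E[J^{-1/2}; J ≥ 1]`. Bounding `1/√r ≤ √2/√(r+1)`
reduces it to `√2 · E[1/√(J+1)]`, which Jensen for the concave `√` bounds by `√2 · √E[1/(J+1)]`.
Finally `E[1/(J+1)]` is computed exactly via `(M+1) C(M,r) = (r+1) C(M+1,r+1)`, an index shift in the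
binomial theorem for `M + 1`, and is at most `1/((M+1)p)`.
-/

open Finset Real

theorem one_div_sqrt_le_sqrt_two_div_sqrt_add_one {r : ℝ} (hr : 1 ≤ r) :
    1 / √r ≤ √2 / √(r + 1) := by
  rw [div_le_div_iff₀ (by positivity) (by positivity), one_mul, ← sqrt_mul zero_le_two]
  exact sqrt_le_sqrt (by linarith)

theorem sum_choose_mul_pow_mul_pow_div_add_one {p : ℝ} (hp : p ≠ 0) (q : ℝ) (M : ℕ) :
    ∑ r ∈ range (M + 1), (M.choose r : ℝ) * p ^ r * q ^ (M - r) / (r + 1)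
      = ((p + q) ^ (M + 1) - q ^ (M + 1)) / ((M + 1) * p) := by
  have hM : (M + 1 : ℝ) * p ≠ 0 := mul_ne_zero (by positivity) hp
  have hterm : ∀ r ∈ range (M + 1), (M.choose r : ℝ) * p ^ r * q ^ (M - r) / (r + 1)
      = p ^ (r + 1) * q ^ (M + 1 - (r + 1)) * ((M + 1).choose (r + 1) : ℝ) / ((M + 1) * p) := by
    intro r _
    have hchoose : ((M + 1 : ℕ) : ℝ) * M.choose r = (M + 1).choose (r + 1) * ((r : ℕ) + 1 : ℝ) := by
      exact_mod_cast Nat.add_one_mul_choose_eq M r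
    rw [Nat.add_sub_add_right, div_eq_div_iff (by positivity) hM]
    push_cast at hchoose
    linear_combination (p ^ (r + 1) * q ^ (M - r)) * hchoose
  rw [sum_congr rfl hterm, ← sum_div, add_pow, sum_range_succ' _ (M + 1)]
  simp

theorem sum_binomial_div_sqrt_add_one_le {p q : ℝ} (hp : 0 < p) (hq : 0 ≤ q) (hpq : p + q = 1)
    (M : ℕ) :
    ∑ r ∈ range (M + 1), (M.choose r : ℝ) * p ^ r * q ^ (M - r) / √(r + 1)
      ≤ 1 / √((M + 1) * p) := by
  set w : ℕ → ℝ := fun r ↦ (M.choose r : ℝ) * p ^ r * q ^ (M - r)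
  have hw : ∀ r ∈ range (M + 1), 0 ≤ w r := fun r _ ↦ by positivity
  have hw_sum : ∑ r ∈ range (M + 1), w r = 1 := by
    rw [← one_pow (M := ℝ) M, ← hpq, add_pow]
    exact sum_congr rfl fun r _ ↦ by ring
  have jensen := strictConcaveOn_sqrt.concaveOn.le_map_sum hw hw_sum
    (p := fun r : ℕ ↦ ((r : ℝ) + 1)⁻¹) fun r _ ↦ Set.mem_Ici.2 (by positivity)
  simp only [smul_eq_mul, sqrt_inv, ← div_eq_mul_inv] at jensen
  calc ∑ r ∈ range (M + 1), w r / √(r + 1)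
    _ ≤ √(∑ r ∈ range (M + 1), w r / (r + 1)) := jensen
    _ = √((1 - q ^ (M + 1)) / ((M + 1) * p)) := by
      rw [sum_choose_mul_pow_mul_pow_div_add_one hp.ne', hpq, one_pow]
    _ ≤ √(1 / ((M + 1) * p)) := sqrt_le_sqrt (by gcongr; linarith [pow_nonneg hq (M + 1)])
    _ = 1 / √((M + 1) * p) := by rw [one_div, sqrt_inv, one_div]

theorem stmt_3 (γ : ℝ) (hγ : γ ∈ Set.Ico (0:ℝ) 1) (M : ℕ) (hM : 1 ≤ M) :
    (∑ r ∈ Icc 1 M,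
        (1 / Real.sqrt r) * (Nat.choose M r : ℝ) * (1 - γ) ^ r * γ ^ (M - r))
      ≤ Real.sqrt 2 / Real.sqrt ((1 - γ) * M) := by
  obtain ⟨hγ0, hγ1⟩ := hγ
  have hp : 0 < 1 - γ := by linarith
  set w : ℕ → ℝ := fun r ↦ (M.choose r : ℝ) * (1 - γ) ^ r * γ ^ (M - r)
  have hw : ∀ r, 0 ≤ w r := fun r ↦ by positivity
  calc ∑ r ∈ Icc 1 M, 1 / √r * M.choose r * (1 - γ) ^ r * γ ^ (M - r)
      ≤ ∑ r ∈ Icc 1 M, √2 * (w r / √(r + 1)) := sum_le_sum fun r hr ↦ by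
        have hr1 : (1 : ℝ) ≤ r := by exact_mod_cast (mem_Icc.1 hr).1
        calc _ = 1 / √r * w r := by ring
          _ ≤ √2 / √(r + 1) * w r :=
            mul_le_mul_of_nonneg_right (one_div_sqrt_le_sqrt_two_div_sqrt_add_one hr1) (hw r)
          _ = √2 * (w r / √(r + 1)) := by ring
    _ ≤ ∑ r ∈ range (M + 1), √2 * (w r / √(r + 1)) :=
      sum_le_sum_of_subset_of_nonneg (fun r hr ↦ mem_range.2 (by grind))
        fun r _ _ ↦ mul_nonneg (sqrt_nonneg 2) (div_nonneg (hw r) (sqrt_nonneg _))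
    _ ≤ √2 * (1 / √((M + 1) * (1 - γ))) := by
      rw [← mul_sum]
      exact mul_le_mul_of_nonneg_left
        (sum_binomial_div_sqrt_add_one_le hp hγ0 (by ring) M) (sqrt_nonneg 2)
    _ ≤ √2 / √((1 - γ) * M) := by
      rw [mul_one_div, mul_comm (1 - γ)]
      gcongr
      linarith
end

section
/- Fix r₀ ∈ ℕ and γ ∈ [0,1). There exist c > 0 and M₀ ∈ ℕ such that for all M ≥ M₀, Σ_{r=r₀}^M (1/√r) · C(M,r) (1−γ)^r γ^{M−r} ≥ c / √((1−γ) M). -/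
open Finset Real Filter Topology

/-
Since `1 / √r ≥ 1 / √M` for `1 ≤ r ≤ M`, the sum is at least `1 / √M` times the binomial mass
of `[max r₀ 1, M]`. Each of the finitely many omitted binomial weights `C(M, r) (1 - γ)^r γ^(M-r)`,
`r < max r₀ 1`, is polynomial in `M` times `γ^(M-r)` and tends to `0`, so that mass is eventually
at least `1 / 2`, and `c = √(1 - γ) / 2` works.
-/

lemma tendsto_choose_mul_pow_sub_atTop (r : ℕ) {q : ℝ} (hq0 : 0 ≤ q) (hq1 : q < 1) :
    Tendsto (fun M : ℕ => (M.choose r : ℝ) * q ^ (M - r)) atTop (𝓝 0) := by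
  rw [← tendsto_add_atTop_iff_nat r]
  simp only [Nat.add_sub_cancel]
  have hdom : Tendsto (fun n : ℕ => ((r : ℝ) + 1) ^ r * ((n : ℝ) ^ r * q ^ n)) atTop (𝓝 0) := by
    simpa using (tendsto_pow_const_mul_const_pow_of_lt_one r hq0 hq1).const_mul (((r : ℝ) + 1) ^ r)
  refine squeeze_zero' (Eventually.of_forall fun n => by positivity) ?_ hdom
  filter_upwards [eventually_ge_atTop 1] with n hn
  have hn' : (1 : ℝ) ≤ n := by exact_mod_cast hn
  calc ((n + r).choose r : ℝ) * q ^ n ≤ ((n : ℝ) + r) ^ r * q ^ n := by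
        gcongr; exact_mod_cast Nat.choose_le_pow (n + r) r
    _ ≤ (((r : ℝ) + 1) * n) ^ r * q ^ n := by gcongr; nlinarith
    _ = ((r : ℝ) + 1) ^ r * ((n : ℝ) ^ r * q ^ n) := by rw [mul_pow]; ring

lemma tendsto_sum_range_choose_mul_pow_mul_pow_sub_atTop (s : ℕ) (p : ℝ) {q : ℝ} (hq0 : 0 ≤ q)
    (hq1 : q < 1) :
    Tendsto (fun M : ℕ => ∑ r ∈ range s, (M.choose r : ℝ) * p ^ r * q ^ (M - r)) atTop (𝓝 0) := by
  rw [← sum_const_zero (s := range s)]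
  refine tendsto_finsetSum _ fun r _ => ?_
  simpa [mul_right_comm _ (p ^ r)] using
    (tendsto_choose_mul_pow_sub_atTop r hq0 hq1).mul_const (p ^ r)

lemma sum_Icc_choose_mul_pow_mul_pow_sub {p q : ℝ} (hpq : p + q = 1) {s M : ℕ} (hsM : s ≤ M + 1) :
    ∑ r ∈ Icc s M, (M.choose r : ℝ) * p ^ r * q ^ (M - r) =
      1 - ∑ r ∈ range s, (M.choose r : ℝ) * p ^ r * q ^ (M - r) := by
  have htotal : ∑ r ∈ range (M + 1), (M.choose r : ℝ) * p ^ r * q ^ (M - r) = 1 := by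
    rw [← one_pow (M := ℝ) M, ← hpq, add_pow]
    exact sum_congr rfl fun r _ => by ring
  rw [← htotal, range_eq_Ico, ← sum_Ico_consecutive _ (Nat.zero_le s) hsM, ← range_eq_Ico,
    ← Ico_add_one_right_eq_Icc]
  ring

lemma one_div_sqrt_mul_sum_Icc_le_sum_Icc_one_div_sqrt_mul {w : ℕ → ℝ} (hw : ∀ r, 0 ≤ w r)
    {r₀ s M : ℕ} (hs : 1 ≤ s) (hr₀s : r₀ ≤ s) :
    1 / √M * ∑ r ∈ Icc s M, w r ≤ ∑ r ∈ Icc r₀ M, 1 / √r * w r := by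
  rw [mul_sum]
  calc ∑ r ∈ Icc s M, 1 / √M * w r ≤ ∑ r ∈ Icc s M, 1 / √r * w r := by
        refine sum_le_sum fun r hr => ?_
        obtain ⟨hsr, hrM⟩ := mem_Icc.mp hr
        have hr : (0 : ℝ) < r := by exact_mod_cast hs.trans hsr
        gcongr
        exact hw r
    _ ≤ ∑ r ∈ Icc r₀ M, 1 / √r * w r :=
        sum_le_sum_of_subset_of_nonneg (Icc_subset_Icc_left hr₀s) fun r _ _ =>
          mul_nonneg (by positivity) (hw r)

theorem stmt_4 (r₀ : ℕ) (γ : ℝ) (hγ : γ ∈ Set.Ico (0:ℝ) 1) :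
    ∃ c > (0:ℝ), ∃ M₀ : ℕ, ∀ M ≥ M₀,
      c / Real.sqrt ((1 - γ) * M) ≤
        ∑ r ∈ Icc r₀ M,
          (1 / Real.sqrt r) * (Nat.choose M r : ℝ) * (1 - γ) ^ r * γ ^ (M - r) := by
  obtain ⟨hγ0, hγ1⟩ := hγ
  have hp : 0 < 1 - γ := by linarith
  obtain ⟨M₁, hM₁⟩ := eventually_atTop.mp <|
    (tendsto_sum_range_choose_mul_pow_mul_pow_sub_atTop (max r₀ 1) (1 - γ) hγ0 hγ1).eventually
      (eventually_le_nhds one_half_pos)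
  refine ⟨√(1 - γ) / 2, by positivity, max M₁ (max r₀ 1), fun M hM => ?_⟩
  have hmass : 1 / 2 ≤ ∑ r ∈ Icc (max r₀ 1) M, (M.choose r : ℝ) * (1 - γ) ^ r * γ ^ (M - r) := by
    rw [sum_Icc_choose_mul_pow_mul_pow_sub (by ring) (by omega)]
    linarith [hM₁ M (le_of_max_le_left hM)]
  have hM : (0 : ℝ) < √M := sqrt_pos.mpr (by exact_mod_cast (by omega : 0 < M))
  calc √(1 - γ) / 2 / √((1 - γ) * M) = 1 / √M * (1 / 2) := by
        rw [sqrt_mul hp.le]; field_simp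
    _ ≤ 1 / √M * ∑ r ∈ Icc (max r₀ 1) M, (M.choose r : ℝ) * (1 - γ) ^ r * γ ^ (M - r) := by
        gcongr
    _ ≤ ∑ r ∈ Icc r₀ M, 1 / √r * ((M.choose r : ℝ) * (1 - γ) ^ r * γ ^ (M - r)) :=
        one_div_sqrt_mul_sum_Icc_le_sum_Icc_one_div_sqrt_mul (fun r => by positivity)
          (le_max_right _ _) (le_max_left _ _)
    _ = _ := sum_congr rfl fun r _ => by ring
end

section
/- Let f : [0,∞) → [0,1] be non-decreasing. Suppose there exist 0 < α₁ < α₀ such that (i) f is concave on [0,α₀], and (ii) every subgradient slope m of f at α₁ (i.e., −m ∈ ∂(−f)(α₁)) satisfies m ≥ (1 − f(α₁))/(α₀ − α₁), in the sense that −sup(∂(−f)(α₁)) ≥ (1 − f(α₁))/(α₀ − α₁). Then for any nonnegative random variable X with E[X] ≤ α₁, we have f(E[X]) ≥ E[f(X)]. -/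
/-!
Since `E[X] ≤ α₁ < α₀`, concavity gives a line through `(E[X], f (E[X]))` lying above `f` on
`[0, α₀]`. Its slope is at least that of any supporting line at `α₁`, hence at least
`(1 - f α₁) / (α₀ - α₁) ≥ 0`; so at `α₀` the line is already above `1`, and beyond `α₀` it
stays above `1 ≥ f`. Taking expectations of `f X ≤ f (E[X]) + m (X - E[X])`
gives the claim. (When `E[X] = 0` there need be no such line, but then `X = 0` a.s.)
-/

open MeasureTheory Set

/-- `-m ∈ ∂(-f|ₛ)(p)`, in the notation of subdifferentials of convex functions. -/
def IsSupergradient (f : ℝ → ℝ) (s : Set ℝ) (p m : ℝ) : Prop :=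
  ∀ x ∈ s, f x ≤ f p + m * (x - p)

theorem IsSupergradient.le_of_lt {f : ℝ → ℝ} {s : Set ℝ} {p q m n : ℝ}
    (hm : IsSupergradient f s p m) (hn : IsSupergradient f s q n)
    (hp : p ∈ s) (hq : q ∈ s) (hpq : p < q) : n ≤ m := by
  have hmq := hm q hq
  have hnp := hn p hp
  nlinarith

theorem ConcaveOn.exists_isSupergradient {f : ℝ → ℝ} {S : Set ℝ} {p : ℝ}
    (hf : ConcaveOn ℝ S f) (hp : p ∈ interior S) : ∃ m, IsSupergradient f S p m := by
  have hg : ConvexOn ℝ S (-f) := hf.neg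
  refine ⟨-derivWithin (-f) (Ioi p) p, fun x hx => ?_⟩
  rcases lt_trichotomy x p with hxp | rfl | hpx
  · have h := (hg.slope_le_leftDeriv_of_mem_interior hx hp hxp).trans
      (hg.leftDeriv_le_rightDeriv_of_mem_interior hp)
    rw [slope_def_field, div_le_iff₀ (sub_pos.2 hxp)] at h
    simp only [Pi.neg_apply] at h
    linarith
  · simp
  · have h := hg.rightDeriv_le_slope_of_mem_interior hp hx hpx
    rw [slope_def_field, le_div_iff₀ (sub_pos.2 hpx)] at h
    simp only [Pi.neg_apply] at h
    linarith

theorem integral_comp_le_of_isSupergradient {Ω : Type*} [MeasurableSpace Ω] {μ : Measure Ω}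
    [IsProbabilityMeasure μ] {f : ℝ → ℝ} {s : Set ℝ} {X : Ω → ℝ} {m : ℝ}
    (hX : Integrable X μ) (hfX : Integrable (fun ω => f (X ω)) μ) (hXs : ∀ᵐ ω ∂μ, X ω ∈ s)
    (hm : IsSupergradient f s (∫ ω, X ω ∂μ) m) :
    ∫ ω, f (X ω) ∂μ ≤ f (∫ ω, X ω ∂μ) := by
  set p := ∫ ω, X ω ∂μ
  have hline : Integrable (fun ω => m * (X ω - p)) μ := (hX.sub (integrable_const p)).const_mul m
  calc ∫ ω, f (X ω) ∂μ ≤ ∫ ω, (f p + m * (X ω - p)) ∂μ :=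
        integral_mono_ae hfX ((integrable_const _).add hline) (hXs.mono fun ω hω => hm _ hω)
    _ = f p := by
        rw [integral_add (integrable_const _) hline, integral_const_mul,
          integral_sub hX (integrable_const p)]
        simp [p]

theorem exists_isSupergradient_Ici {f : ℝ → ℝ} {a α₀ α₁ M p : ℝ} (hα : α₁ < α₀)
    (hle : ∀ x ∈ Ici a, f x ≤ M) (hconc : ConcaveOn ℝ (Icc a α₀) f)
    (hsubgrad : ∀ m, IsSupergradient f (Icc a α₀) α₁ m → (M - f α₁) / (α₀ - α₁) ≤ m)
    (hp : p ∈ Ioc a α₁) : ∃ m, IsSupergradient f (Ici a) p m := by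
  obtain ⟨hap, hpα₁⟩ := hp
  have hα₁ : α₁ ∈ Icc a α₀ := ⟨hap.le.trans hpα₁, hα.le⟩
  obtain ⟨m, hm⟩ := hconc.exists_isSupergradient
    (p := p) (by rw [interior_Icc]; exact ⟨hap, hpα₁.trans_lt hα⟩)
  have hcm : (M - f α₁) / (α₀ - α₁) ≤ m := by
    rcases hpα₁.lt_or_eq with hlt | rfl
    · obtain ⟨m₁, hm₁⟩ := hconc.exists_isSupergradient
        (p := α₁) (by rw [interior_Icc]; exact ⟨hap.trans hlt, hα⟩)
      exact (hsubgrad m₁ hm₁).trans (hm.le_of_lt hm₁ ⟨hap.le, hlt.le.trans hα.le⟩ hα₁ hlt)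
    · exact hsubgrad m hm
  have hgap : 0 < α₀ - α₁ := sub_pos.2 hα
  have hM : M - f α₁ ≤ m * (α₀ - α₁) := (div_le_iff₀ hgap).1 hcm
  have hm0 : 0 ≤ m := (div_nonneg (sub_nonneg.2 (hle α₁ hα₁.1)) hgap.le).trans hcm
  refine ⟨m, fun x hx => ?_⟩
  rcases le_or_gt x α₀ with hxα₀ | hα₀x
  · exact hm x ⟨hx, hxα₀⟩
  calc f x ≤ M := hle x hx
    _ ≤ f α₁ + m * (α₀ - α₁) := by linarith
    _ ≤ f p + m * (α₁ - p) + m * (α₀ - α₁) := by linarith [hm α₁ hα₁]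
    _ ≤ f p + m * (x - p) := by nlinarith

theorem stmt_5_general {Ω : Type*} [MeasurableSpace Ω] (μ : Measure Ω) [IsProbabilityMeasure μ]
    (f : ℝ → ℝ) (α₀ α₁ : ℝ) (h1 : α₁ < α₀)
    (hrange : ∀ x ∈ Ici (0:ℝ), f x ∈ Icc (0:ℝ) 1)
    (hconc : ConcaveOn ℝ (Icc 0 α₀) f)
    (hsubgrad : ∀ m : ℝ, (∀ x ∈ Icc (0:ℝ) α₀, f x ≤ f α₁ + m * (x - α₁)) →
      (1 - f α₁) / (α₀ - α₁) ≤ m)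
    (X : Ω → ℝ) (hXint : Integrable X μ) (hXpos : ∀ᵐ ω ∂μ, 0 ≤ X ω)
    (hfXint : Integrable (fun ω => f (X ω)) μ)
    (hEX : ∫ ω, X ω ∂μ ≤ α₁) :
    ∫ ω, f (X ω) ∂μ ≤ f (∫ ω, X ω ∂μ) := by
  set p := ∫ ω, X ω ∂μ
  have hp0 : 0 ≤ p := integral_nonneg_of_ae hXpos
  rcases hp0.eq_or_lt with hp | hp
  · have hX : ∀ᵐ ω ∂μ, X ω ∈ ({p} : Set ℝ) := by
      filter_upwards [(integral_eq_zero_iff_of_nonneg_ae hXpos hXint).1 hp.symm] with ω hω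
      simp [hω, ← hp]
    exact integral_comp_le_of_isSupergradient (m := 0) hXint hfXint hX
      (by simp [IsSupergradient, p])
  · obtain ⟨m, hm⟩ := exists_isSupergradient_Ici h1 (fun x hx => (hrange x hx).2) hconc hsubgrad
      ⟨hp, hEX⟩
    exact integral_comp_le_of_isSupergradient hXint hfXint hXpos hm

theorem stmt_5 {Ω : Type*} [MeasurableSpace Ω] (μ : Measure Ω) [IsProbabilityMeasure μ]
    (f : ℝ → ℝ) (α₀ α₁ : ℝ) (h0 : 0 < α₁) (h1 : α₁ < α₀)
    (hmono : MonotoneOn f (Ici 0))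
    (hrange : ∀ x ∈ Ici (0:ℝ), f x ∈ Icc (0:ℝ) 1)
    (hconc : ConcaveOn ℝ (Icc 0 α₀) f)
    (hsubgrad : ∀ m : ℝ, (∀ x ∈ Icc (0:ℝ) α₀, f x ≤ f α₁ + m * (x - α₁)) →
      (1 - f α₁) / (α₀ - α₁) ≤ m)
    (X : Ω → ℝ) (hXint : Integrable X μ) (hXpos : ∀ᵐ ω ∂μ, 0 ≤ X ω)
    (hfXint : Integrable (fun ω => f (X ω)) μ)
    (hEX : ∫ ω, X ω ∂μ ≤ α₁) :
    ∫ ω, f (X ω) ∂μ ≤ f (∫ ω, X ω ∂μ) :=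
  stmt_5_general μ f α₀ α₁ h1 hrange hconc hsubgrad X hXint hXpos hfXint hEX
end

section
/- For x ∈ (0,1) and M, the function defined on positive integers by ψ(M) = (1/p²) Σ_{j,k} (γ_{jk}^{M+1} − γ_{jk}^M)/(γ₁^{M+1} − γ₁^M), where 0 ≤ γ_{jk} ≤ γ₁ < 1 for all j,k, equals (1/p²) Σ_{j,k} (γ_{jk}/γ₁)^M · (1−γ_{jk})/(1−γ₁), and is non-increasing in M. Consequently, the piecewise-linear interpolation of the points ((1/p²) Σ_{j,k} γ_{jk}^M, γ₁^M)_{M=1}^∞ is concave. -/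
open Finset

lemma term_eq_aux (γ₁ g : ℝ) (h0 : 0 < γ₁) (h1 : γ₁ < 1) (M : ℕ) :
    (g ^ (M + 1) - g ^ M) / (γ₁ ^ (M + 1) - γ₁ ^ M)
      = (g / γ₁) ^ M * ((1 - g) / (1 - γ₁)) := by
  have hγ : γ₁ ≠ 0 := h0.ne'
  have hγM : γ₁ ^ M ≠ 0 := pow_ne_zero _ hγ
  have h1' : (1 : ℝ) - γ₁ ≠ 0 := by linarith
  have e1 : g ^ (M + 1) - g ^ M = g ^ M * (g - 1) := by ring
  have e2 : γ₁ ^ (M + 1) - γ₁ ^ M = γ₁ ^ M * (γ₁ - 1) := by ring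
  have hd : γ₁ ^ M * (γ₁ - 1) ≠ 0 := mul_ne_zero hγM (by linarith)
  rw [e1, e2, div_pow, div_mul_div_comm,
    div_eq_div_iff hd (mul_ne_zero hγM h1')]
  ring

theorem stmt_7 (p : ℕ) (hp : 1 ≤ p) (γ₁ : ℝ) (hγ₁ : γ₁ ∈ Set.Ioo (0:ℝ) 1)
    (γ : Fin p → Fin p → ℝ)
    (hle : ∀ j k, 0 ≤ γ j k ∧ γ j k ≤ γ₁)
    (ψ : ℕ → ℝ)
    (hψ : ∀ M, ψ M = (1 / (p : ℝ) ^ 2) *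
      ∑ j, ∑ k, (γ j k ^ (M + 1) - γ j k ^ M) / (γ₁ ^ (M + 1) - γ₁ ^ M)) :
    (∀ M : ℕ, ψ M = (1 / (p : ℝ) ^ 2) *
        ∑ j, ∑ k, (γ j k / γ₁) ^ M * ((1 - γ j k) / (1 - γ₁))) ∧
    Antitone ψ := by
  obtain ⟨h0, h1⟩ := hγ₁
  have heq : ∀ M : ℕ, ψ M = (1 / (p : ℝ) ^ 2) *
      ∑ j, ∑ k, (γ j k / γ₁) ^ M * ((1 - γ j k) / (1 - γ₁)) := by
    intro M
    rw [hψ M]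
    congr 1
    refine Finset.sum_congr rfl fun j _ => Finset.sum_congr rfl fun k _ => ?_
    exact term_eq_aux γ₁ (γ j k) h0 h1 M
  refine ⟨heq, antitone_nat_of_succ_le fun M => ?_⟩
  rw [heq M, heq (M + 1)]
  have hp2 : (0 : ℝ) ≤ 1 / (p : ℝ) ^ 2 := by positivity
  refine mul_le_mul_of_nonneg_left ?_ hp2
  refine Finset.sum_le_sum fun j _ => Finset.sum_le_sum fun k _ => ?_
  obtain ⟨hg0, hg1⟩ := hle j k
  have hq0 : 0 ≤ γ j k / γ₁ := div_nonneg hg0 h0.le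
  have hq1 : γ j k / γ₁ ≤ 1 := (div_le_one h0).mpr hg1
  have hc : 0 ≤ (1 - γ j k) / (1 - γ₁) :=
    div_nonneg (by linarith) (by linarith)
  exact mul_le_mul_of_nonneg_right
    (pow_le_pow_of_le_one hq0 hq1 (Nat.le_succ M)) hc
end

section
/- Let Y ∈ ℝ^n with Y ≠ 0 and X ∈ ℝ^{n×p}, and let g : ℝ → [0,1]. Let i_s be a random index with P(i_s = i) = |Y_i| / ‖Y‖₁, and conditionally on i_s = i, let X̃_{ij}, X̃_{ik} ∈ {−1,1} be independent with P(X̃_{ij} = 1) = g(X_{ij}) and P(X̃_{ik} = 1) = g(X_{ik}). Then P(sgn(Y_{i_s}) = X̃_{i_s j} · X̃_{i_s k}) = 1/2 + (1/(2‖Y‖₁)) Σ_{i=1}^n Y_i (1 − 2g(X_{ij}))(1 − 2g(X_{ik})). -/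
open Finset

/-- The match probability: conditioning on the sampled index `i` (drawn with
probability `|Y i| / ‖Y‖₁`), the two transformed signs are independent with
`P(X̃_{ij} = 1) = g (X i j)`, so the total probability that
`sgn(Y_{i_s}) = X̃_{i_s j} · X̃_{i_s k}` is the explicit mixture sum below. -/
theorem stmt_9 (n p : ℕ) (Y : Fin n → ℝ) (hY : ∀ i, Y i ≠ 0)
    (hYne : (∑ i, |Y i|) ≠ 0)
    (X : Fin n → Fin p → ℝ) (g : ℝ → ℝ) (hg : ∀ x, g x ∈ Set.Icc (0:ℝ) 1)
    (j k : Fin p) :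
    (∑ i, (|Y i| / ∑ i', |Y i'|) *
      (if 0 < Y i then
          g (X i j) * g (X i k) + (1 - g (X i j)) * (1 - g (X i k))
        else
          g (X i j) * (1 - g (X i k)) + (1 - g (X i j)) * g (X i k)))
    = 1 / 2 + (1 / (2 * ∑ i, |Y i|)) *
        ∑ i, Y i * (1 - 2 * g (X i j)) * (1 - 2 * g (X i k)) := by
  set S : ℝ := ∑ i, |Y i| with hS
  have key : ∀ i : Fin n, (|Y i| / S) *
      (if 0 < Y i then
          g (X i j) * g (X i k) + (1 - g (X i j)) * (1 - g (X i k))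
        else
          g (X i j) * (1 - g (X i k)) + (1 - g (X i j)) * g (X i k))
      = |Y i| / (2 * S) + (1 / (2 * S)) * (Y i * (1 - 2 * g (X i j)) * (1 - 2 * g (X i k))) := by
    intro i
    by_cases hpos : 0 < Y i
    · rw [if_pos hpos, abs_of_pos hpos]
      field_simp
      ring
    · rw [if_neg hpos]
      have hneg : Y i < 0 := lt_of_le_of_ne (not_lt.mp hpos) (hY i)
      rw [abs_of_neg hneg]
      field_simp
      ring
  rw [Finset.sum_congr rfl (fun i _ => key i), Finset.sum_add_distrib,
    ← Finset.sum_div, ← hS, ← Finset.mul_sum]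
  congr 1
  rw [div_eq_div_iff (by simpa using mul_ne_zero two_ne_zero hYne) two_ne_zero]
  ring
end

section
/- Let Y ∈ ℝ^n with all Y_i ≠ 0 and X ∈ [−1,1]^{n×p}. With the unbiased transform g(x) = (x+1)/2 and sampling index i_s with P(i_s = i) = |Y_i|/‖Y‖₁, the match probability satisfies P(sgn(Y_{i_s}) = X̃_{i_s j} X̃_{i_s k}) = 1/2 + (1/(2‖Y‖₁)) Σ_{i=1}^n Y_i X_{ij} X_{ik}. -/
open Finset

/-- With the unbiased transform `g x = (x+1)/2`, the match probability (written as
the explicit mixture over the sampled index) equals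
`1/2 + (1/(2‖Y‖₁)) Σ_i Y_i X_{ij} X_{ik}`. -/
theorem stmt_11 (n p : ℕ) (Y : Fin n → ℝ) (hY : ∀ i, Y i ≠ 0)
    (hYne : (∑ i, |Y i|) ≠ 0)
    (X : Fin n → Fin p → ℝ) (hX : ∀ i j, X i j ∈ Set.Icc (-1:ℝ) 1)
    (g : ℝ → ℝ) (hg : ∀ x, g x = (x + 1) / 2)
    (j k : Fin p) :
    (∑ i, (|Y i| / ∑ i', |Y i'|) *
      (if 0 < Y i then
          g (X i j) * g (X i k) + (1 - g (X i j)) * (1 - g (X i k))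
        else
          g (X i j) * (1 - g (X i k)) + (1 - g (X i j)) * g (X i k)))
    = 1 / 2 + (1 / (2 * ∑ i, |Y i|)) * ∑ i, Y i * X i j * X i k := by
  set S := ∑ i', |Y i'| with hS
  have key : ∀ i, (|Y i| / S) *
      (if 0 < Y i then
          g (X i j) * g (X i k) + (1 - g (X i j)) * (1 - g (X i k))
        else
          g (X i j) * (1 - g (X i k)) + (1 - g (X i j)) * g (X i k))
      = |Y i| / S * (1 / 2) + (1 / (2 * S)) * (Y i * X i j * X i k) := by
    intro i
    rcases lt_or_gt_of_ne (hY i) with h | h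
    · rw [if_neg (by linarith), abs_of_neg h, hg, hg]
      field_simp
      ring
    · rw [if_pos h, abs_of_pos h, hg, hg]
      field_simp
      ring
  rw [Finset.sum_congr rfl fun i _ => key i, Finset.sum_add_distrib,
    ← Finset.sum_mul, ← Finset.sum_div, ← hS, div_self hYne, one_mul,
    ← Finset.mul_sum]
end

section
/- Let γ ∈ (0,1), γ₀ = p^{−1/M} with γ₀ < γ, and let {γ_{jk}}_{j,k=1}^p ⊂ [0,1] satisfy: #{(j,k) : γ_{jk} > γ} ≤ c₁ p and #{(j,k) : γ_{jk} > γ₀} ≤ c₂ p^{1 + log γ / log γ₀}. Then γ^{−M} Σ_{j,k} γ_{jk}^M ≤ (c₁ + c₂ + 1) p^{1 + log γ / log γ₀}. -/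
open Finset Real

theorem stmt_16 (p M : ℕ) (hp : 2 ≤ p) (hM : 1 ≤ M)
    (γ γ₀ c₁ c₂ : ℝ) (hγ : γ ∈ Set.Ioo (0:ℝ) 1)
    (hγ₀ : γ₀ = (p : ℝ) ^ (-(1:ℝ) / M)) (hlt : γ₀ < γ)
    (hc₁ : 0 ≤ c₁) (hc₂ : 0 ≤ c₂)
    (γs : Fin p → Fin p → ℝ) (hγs : ∀ j k, γs j k ∈ Set.Icc (0:ℝ) 1)
    (h1 : (((univ ×ˢ univ).filter
        (fun jk : Fin p × Fin p => γ < γs jk.1 jk.2)).card : ℝ) ≤ c₁ * p)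
    (h2 : (((univ ×ˢ univ).filter
        (fun jk : Fin p × Fin p => γ₀ < γs jk.1 jk.2)).card : ℝ)
        ≤ c₂ * (p : ℝ) ^ ((1:ℝ) + Real.log γ / Real.log γ₀)) :
    (γ ^ M)⁻¹ * ∑ j, ∑ k, γs j k ^ M
      ≤ (c₁ + c₂ + 1) * (p : ℝ) ^ ((1:ℝ) + Real.log γ / Real.log γ₀) := by
  obtain ⟨hγpos, hγ1⟩ := hγ
  have hp1 : (1:ℝ) < p := by exact_mod_cast lt_of_lt_of_le one_lt_two hp
  have hppos : (0:ℝ) < p := by linarith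
  have hlogp : 0 < Real.log p := Real.log_pos hp1
  have hMpos : (0:ℝ) < M := by exact_mod_cast hM
  have hγMpos : 0 < γ ^ M := pow_pos hγpos M
  set t : ℝ := Real.log γ / Real.log γ₀ with ht
  have hlogγ₀ : Real.log γ₀ = (-(1:ℝ)/M) * Real.log p := by
    rw [hγ₀, Real.log_rpow hppos]
  have hexp : Real.exp (M * Real.log γ) = γ ^ M := by
    rw [Real.exp_nat_mul, Real.exp_log hγpos]
  have key : (p:ℝ) ^ t = (γ ^ M)⁻¹ := by
    rw [Real.rpow_def_of_pos hppos]
    have hlp : Real.log p ≠ 0 := hlogp.ne'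
    rw [show Real.log p * t = -(M * Real.log γ) by
      rw [ht, hlogγ₀]; field_simp [hlp]]
    rw [Real.exp_neg, hexp]
  have hP : (p:ℝ) ^ ((1:ℝ) + t) = p * (γ ^ M)⁻¹ := by
    rw [Real.rpow_add hppos, Real.rpow_one, key]
  have hγ₀M : γ₀ ^ M = (p:ℝ)⁻¹ := by
    rw [hγ₀, ← Real.rpow_natCast ((p:ℝ) ^ (-(1:ℝ)/M)) M, ← Real.rpow_mul hppos.le]
    rw [show (-(1:ℝ)/M) * M = -1 by field_simp]
    rw [Real.rpow_neg_one]
  -- rewrite the double sum as a sum over the product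
  have hsum : ∑ j, ∑ k, γs j k ^ M
      = ∑ jk ∈ (univ ×ˢ univ : Finset (Fin p × Fin p)), γs jk.1 jk.2 ^ M := by
    rw [Finset.sum_product]
  set T : Finset (Fin p × Fin p) := univ ×ˢ univ with hT
  set f : Fin p × Fin p → ℝ := fun jk => γs jk.1 jk.2 ^ M with hf
  set A := T.filter (fun jk => γ < γs jk.1 jk.2) with hA
  set N := T.filter (fun jk => ¬ γ < γs jk.1 jk.2) with hN
  set B := N.filter (fun jk => γ₀ < γs jk.1 jk.2) with hB
  set C := N.filter (fun jk => ¬ γ₀ < γs jk.1 jk.2) with hC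
  have hsplit : ∑ jk ∈ T, f jk = ∑ jk ∈ A, f jk + (∑ jk ∈ B, f jk + ∑ jk ∈ C, f jk) := by
    rw [Finset.sum_filter_add_sum_filter_not N (fun jk => γ₀ < γs jk.1 jk.2) f]
    rw [Finset.sum_filter_add_sum_filter_not T (fun jk => γ < γs jk.1 jk.2) f]
  -- bound on A
  have hSA : ∑ jk ∈ A, f jk ≤ c₁ * p := by
    calc ∑ jk ∈ A, f jk ≤ A.card • (1:ℝ) := by
          apply Finset.sum_le_card_nsmul
          intro x _
          exact pow_le_one₀ (hγs x.1 x.2).1 (hγs x.1 x.2).2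
      _ = (A.card : ℝ) := by rw [nsmul_eq_mul, mul_one]
      _ ≤ c₁ * p := h1
  -- bound on B
  have hBcard : (B.card : ℝ) ≤ c₂ * (p:ℝ) ^ ((1:ℝ) + t) := by
    refine le_trans ?_ h2
    have hsub : B ⊆ T.filter (fun jk => γ₀ < γs jk.1 jk.2) :=
      Finset.filter_subset_filter _ (Finset.filter_subset _ T)
    exact_mod_cast Finset.card_le_card hsub
  have hSB : ∑ jk ∈ B, f jk ≤ c₂ * (p:ℝ) ^ ((1:ℝ) + t) * γ ^ M := by
    calc ∑ jk ∈ B, f jk ≤ B.card • (γ ^ M) := by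
          apply Finset.sum_le_card_nsmul
          intro x hx
          have hx1 := Finset.mem_filter.mp hx
          have hx2 := Finset.mem_filter.mp hx1.1
          exact pow_le_pow_left₀ (hγs x.1 x.2).1 (not_lt.mp hx2.2) M
      _ = (B.card : ℝ) * γ ^ M := by rw [nsmul_eq_mul]
      _ ≤ c₂ * (p:ℝ) ^ ((1:ℝ) + t) * γ ^ M := by
          apply mul_le_mul_of_nonneg_right hBcard hγMpos.le
  -- bound on C
  have hSC : ∑ jk ∈ C, f jk ≤ (p:ℝ) := by
    calc ∑ jk ∈ C, f jk ≤ C.card • ((p:ℝ)⁻¹) := by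
          apply Finset.sum_le_card_nsmul
          intro x hx
          have hx1 := Finset.mem_filter.mp hx
          rw [← hγ₀M]
          exact pow_le_pow_left₀ (hγs x.1 x.2).1 (not_lt.mp hx1.2) M
      _ = (C.card : ℝ) * (p:ℝ)⁻¹ := by rw [nsmul_eq_mul]
      _ ≤ (p:ℝ)^2 * (p:ℝ)⁻¹ := by
          apply mul_le_mul_of_nonneg_right _ (by positivity)
          have : C.card ≤ T.card := Finset.card_le_card
            (le_trans (Finset.filter_subset _ _) (Finset.filter_subset _ _))
          have hTcard : T.card = p * p := by
            rw [hT, Finset.card_product, Finset.card_univ, Fintype.card_fin]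
          calc (C.card : ℝ) ≤ (T.card : ℝ) := by exact_mod_cast this
            _ = (p:ℝ)^2 := by rw [hTcard]; push_cast; ring
      _ = (p:ℝ) := by field_simp
  -- combine
  rw [hsum, hsplit]
  have hu : 0 < (γ ^ M)⁻¹ := by positivity
  have hcombined : (γ ^ M)⁻¹ * (∑ jk ∈ A, f jk + (∑ jk ∈ B, f jk + ∑ jk ∈ C, f jk))
      ≤ (γ ^ M)⁻¹ * (c₁ * p + (c₂ * (p:ℝ) ^ ((1:ℝ) + t) * γ ^ M + p)) := by
    apply mul_le_mul_of_nonneg_left _ hu.le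
    linarith
  refine le_trans hcombined ?_
  rw [hP]
  have hinv : (γ ^ M)⁻¹ * (γ ^ M) = 1 := inv_mul_cancel₀ hγMpos.ne'
  nlinarith [mul_pos hppos hu, mul_nonneg hc₂ (mul_pos hppos hu).le]
end
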